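/- If G is an r-regular graph with r ≥ 2, then χ_g(G) ≥ r + 2. -/

import Mathlib

private lemma two_pow_sum_aux {a b c : ℕ} (hbc : b ≤ c)
    (h : 2 ^ b + 2 ^ c = 2 ^ (a + 1)) : a = b ∧ a = c := by
  have hc : c < a + 1 := by
    have : 2 ^ c < 2 ^ (a + 1) := by
      have : 0 < 2 ^ b := Nat.pow_pos (by norm_num)
      omega
    exact (Nat.pow_lt_pow_iff_right (by norm_num)).mp this
  have ha : a ≤ c := by
    have h1 : 2 ^ (a + 1) ≤ 2 ^ (c + 1) := by
      have hb : 2 ^ b ≤ 2 ^ c := Nat.pow_le_pow_right (by norm_num) hbc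
      have : (2:ℕ) ^ (c+1) = 2 ^ c * 2 := pow_succ 2 c
      omega
    have := (Nat.pow_le_pow_iff_right (by norm_num)).mp h1
    omega
  have hac : a = c := by omega
  subst hac
  have hb : 2 ^ b = 2 ^ a := by
    have : (2:ℕ) ^ (a+1) = 2 ^ a * 2 := pow_succ 2 a
    omega
  have := Nat.pow_right_injective (le_refl 2) hb
  omega

private lemma two_pow_sum {a b c : ℕ} (h : 2 ^ b + 2 ^ c = 2 ^ (a + 1)) :
    a = b ∧ a = c := by
  rcases le_total b c with hbc | hcb
  · exact two_pow_sum_aux hbc h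
  · have := two_pow_sum_aux hcb (show 2 ^ c + 2 ^ b = 2 ^ (a + 1) by omega)
    omega

/-- A graceful `k`-coloring of `G`: a proper vertex coloring with colors in
`{1, ..., k}` whose induced edge coloring `f*(uv) = |f u - f v|` is a proper
edge coloring. -/
def IsGracefulColoring {V : Type*} (G : SimpleGraph V) (k : ℕ) (f : V → ℕ) : Prop :=
  (∀ v, 1 ≤ f v ∧ f v ≤ k) ∧
  (∀ ⦃u v⦄, G.Adj u v → f u ≠ f v) ∧
  (∀ ⦃u v w⦄, G.Adj u v → G.Adj u w → v ≠ w →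
    ((f u : ℤ) - f v).natAbs ≠ ((f u : ℤ) - f w).natAbs)

/-- The graceful chromatic number: the least `k` admitting a graceful `k`-coloring. -/
noncomputable def gracefulChromaticNumber {V : Type*} (G : SimpleGraph V) : ℕ :=
  sInf {k | ∃ f : V → ℕ, IsGracefulColoring G k f}

private lemma exists_graceful {V : Type*} [Fintype V] [Nonempty V] (G : SimpleGraph V) :
    ∃ k, ∃ f : V → ℕ, IsGracefulColoring G k f := by
  classical
  obtain ⟨n, e⟩ : ∃ n, Nonempty (V ≃ Fin n) := ⟨Fintype.card V, ⟨Fintype.equivFin V⟩⟩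
  obtain ⟨e⟩ := e
  have hn : 1 ≤ n := by
    have : (Fintype.card V) ≠ 0 := Fintype.card_ne_zero
    have : Fintype.card V = n := Fintype.card_eq.mpr ⟨e⟩ ▸ by simp [Fintype.card_fin]
    omega
  refine ⟨2 ^ (n - 1), fun v => 2 ^ ((e v : ℕ)), ?_, ?_, ?_⟩
  · intro v
    constructor
    · exact Nat.one_le_two_pow
    · exact Nat.pow_le_pow_right (by norm_num) (by have := (e v).isLt; omega)
  · intro u v huv hf
    have h1 : (e u : ℕ) = (e v : ℕ) := Nat.pow_right_injective (le_refl 2) hf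
    exact G.ne_of_adj huv (e.injective (Fin.ext h1))
  · intro u v w huv huw hvw heq
    set a := ((e u : ℕ)) with ha
    set b := ((e v : ℕ)) with hb
    set c := ((e w : ℕ)) with hc
    have hab : a ≠ b := fun h => G.ne_of_adj huv (e.injective (Fin.ext h))
    have hac : a ≠ c := fun h => G.ne_of_adj huw (e.injective (Fin.ext h))
    have hbc : b ≠ c := fun h => hvw (e.injective (Fin.ext h))
    rcases Int.natAbs_eq_natAbs_iff.mp heq with h | h
    · have : ((2:ℤ) ^ b) = (2:ℤ) ^ c := by push_cast at h ⊢; linarith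
      have : (2:ℕ) ^ b = 2 ^ c := by exact_mod_cast this
      exact hbc (Nat.pow_right_injective (le_refl 2) this)
    · have h2 : ((2 ^ b + 2 ^ c : ℕ) : ℤ) = ((2 ^ (a + 1) : ℕ) : ℤ) := by
        push_cast at h ⊢; ring_nf; ring_nf at h; linarith
      have h3 : (2:ℕ) ^ b + 2 ^ c = 2 ^ (a + 1) := by exact_mod_cast h2
      exact hab (two_pow_sum h3).1

theorem gracefulChromaticNumber_regular {V : Type*} [Fintype V] [Nonempty V]
    (G : SimpleGraph V) [DecidableRel G.Adj] (r : ℕ) (hr : 2 ≤ r)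
    (hreg : G.IsRegularOfDegree r) :
    r + 2 ≤ gracefulChromaticNumber G := by
  classical
  obtain ⟨k0, f0, hf0⟩ := exists_graceful G
  refine le_csInf ⟨k0, f0, hf0⟩ ?_
  rintro k ⟨f, h1, h2, h3⟩
  -- key: at every vertex, r ≤ max (f v - 1) (k - f v)
  have key : ∀ v : V, r ≤ max (f v - 1) (k - f v) := by
    intro v
    have hcard : (G.neighborFinset v).card = r := hreg v
    have hsub : ∀ u ∈ G.neighborFinset v,
        ((f v : ℤ) - f u).natAbs ∈ Finset.Icc 1 (max (f v - 1) (k - f v)) := by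
      intro u hu
      rw [SimpleGraph.mem_neighborFinset] at hu
      have hne := h2 hu
      have hv1 := (h1 v).1; have hv2 := (h1 v).2
      have hu1 := (h1 u).1; have hu2 := (h1 u).2
      rw [Finset.mem_Icc]
      constructor
      · omega
      · rcases le_total (f u) (f v) with hle | hle
        · exact le_trans (by omega) (le_max_left _ _)
        · exact le_trans (by omega) (le_max_right _ _)
    have hinj : Set.InjOn (fun u => ((f v : ℤ) - f u).natAbs)
        (G.neighborFinset v : Set V) := by
      intro x hx y hy hxy
      simp only [Finset.coe_sort_coe, Finset.mem_coe, SimpleGraph.mem_neighborFinset] at hx hy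
      by_contra hne
      exact h3 hx hy hne hxy
    have := Finset.card_le_card_of_injOn _ hsub hinj
    rw [hcard, Nat.card_Icc] at this
    omega
  by_contra hlt
  push_neg at hlt
  -- so k ≤ r + 1; first, k = r + 1
  have hk : k = r + 1 := by
    obtain ⟨v⟩ := ‹Nonempty V›
    have := key v
    have hv1 := (h1 v).1; have hv2 := (h1 v).2
    rcases le_max_iff.mp this with h | h <;> omega
  -- every color is 1 or k
  have hcol : ∀ v, f v = 1 ∨ f v = k := by
    intro v
    have := key v
    have hv1 := (h1 v).1; have hv2 := (h1 v).2
    rcases le_max_iff.mp this with h | h <;> omega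
  obtain ⟨v⟩ := ‹Nonempty V›
  have hcard : (G.neighborFinset v).card = r := hreg v
  obtain ⟨u1, hu1, u2, hu2, hne⟩ := Finset.one_lt_card.mp (by omega :
    1 < (G.neighborFinset v).card)
  rw [SimpleGraph.mem_neighborFinset] at hu1 hu2
  have ha1 := h2 hu1
  have ha2 := h2 hu2
  have hfu : f u1 = f u2 := by
    rcases hcol v with h | h <;> rcases hcol u1 with h' | h' <;>
      rcases hcol u2 with h'' | h'' <;> omega
  exact h3 hu1 hu2 hne (by rw [hfu])
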